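/- Let y be a fractional cache state, assume k ≥ 1, and let g ∈ ℝ^N be the supergradient vector with components g_l = ( c(π_{i*(l)+1}) − c(l) ) · 𝟙{ l* ≤ i*(l) }, where l* = π^{−1}(l) and i*(l) = max{ i ∈ {1,…,K−1} : ∑_{j=1}^{i} y_{π_j} ≤ k and l+N ∉ {π_1,…,π_i} }. Then 0 ≤ g_l ≤ c(π_K) for every l ∈ {1,…,N}; in particular, since π_K > N, the ℓ∞ norm of g satisfies ‖g‖_∞ ≤ c(π_K − N) + c_f, i.e., the subgradients are bounded by the dissimilarity cost of the k-th closest catalog object plus the fetching cost. -/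

import Mathlib

namespace ACAI

/-- `sigma N π i` = number of indices `j ∈ {1,…,i}` with `π j > N`, i.e. the number of
objects among the `i` cheapest that are served from the server. -/
def sigma (N : ℕ) (π : ℕ → ℕ) (i : ℕ) : ℕ :=
  ((Finset.Icc 1 i).filter (fun j => N < π j)).card

/-- `Kmin N k π` = least index `i` with `sigma N π i = k`. -/
noncomputable def Kmin (N k : ℕ) (π : ℕ → ℕ) : ℕ :=
  sInf {i | sigma N π i = k}

/-- `alpha c π i = c (π (i+1)) - c (π i)`. -/
noncomputable def alpha (c : ℕ → ℝ) (π : ℕ → ℕ) (i : ℕ) : ℝ :=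
  c (π (i + 1)) - c (π i)

/-- A fractional cache state: `y ∈ [0,1]^{2N}` with `∑_{i=1}^{N} y i = h` and
`y (i+N) = 1 - y i` for `i ∈ {1,…,N}`. -/
def IsFrac (N h : ℕ) (y : ℕ → ℝ) : Prop :=
  (∀ i ∈ Finset.Icc 1 (2 * N), y i ∈ Set.Icc (0 : ℝ) 1) ∧
  (∑ i ∈ Finset.Icc 1 N, y i = (h : ℝ)) ∧
  (∀ i ∈ Finset.Icc 1 N, y (i + N) = 1 - y i)

/-- An integral cache state: a fractional cache state with `{0,1}` coordinates. -/
def IsInt (N h : ℕ) (y : ℕ → ℝ) : Prop :=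
  IsFrac N h y ∧ ∀ i ∈ Finset.Icc 1 (2 * N), y i = 0 ∨ y i = 1

/-- A request over the augmented catalog `U = {1,…,2N}`: nonnegative costs `c` with
`c (i+N) = c i + cf` for catalog objects `i ∈ {1,…,N}`, and a bijection `π` of
`{1,…,2N}` sorting the costs nondecreasingly and placing each `i ∈ {1,…,N}` before
`i + N`. -/
def Request (N : ℕ) (cf : ℝ) (c : ℕ → ℝ) (π : ℕ → ℕ) : Prop :=
  (∀ i ∈ Finset.Icc 1 (2 * N), 0 ≤ c i) ∧
  (∀ i ∈ Finset.Icc 1 N, c (i + N) = c i + cf) ∧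
  Set.BijOn π (Set.Icc 1 (2 * N)) (Set.Icc 1 (2 * N)) ∧
  (∀ i, 1 ≤ i → i < 2 * N → c (π i) ≤ c (π (i + 1))) ∧
  (∀ j l, j ∈ Set.Icc 1 (2 * N) → l ∈ Set.Icc 1 (2 * N) →
    π j ≤ N → π l = π j + N → j < l)

/-- The caching gain
`G(y) = ∑_{i=1}^{K-1} α_i · min { k - σ_i, (∑_{j=1}^{i} y_{π j}) - σ_i }`. -/
noncomputable def gain (N k : ℕ) (c : ℕ → ℝ) (π : ℕ → ℕ) (y : ℕ → ℝ) : ℝ :=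
  ∑ i ∈ Finset.Icc 1 (Kmin N k π - 1),
    alpha c π i *
      min ((k : ℝ) - sigma N π i) ((∑ j ∈ Finset.Icc 1 i, y (π j)) - sigma N π i)

open Classical in
/-- `Iset N π i = { j ∈ {1,…,i} : π j ≤ N and π j + N ∉ {π 1, …, π i} }`. -/
noncomputable def Iset (N : ℕ) (π : ℕ → ℕ) (i : ℕ) : Finset ℕ :=
  (Finset.Icc 1 i).filter (fun j => π j ≤ N ∧ ∀ l ∈ Finset.Icc 1 i, π l ≠ π j + N)

/-- The auxiliary (multilinear) gain
`L(y) = ∑_{i=1}^{K-1} α_i (k - σ_i) (1 - ∏_{j ∈ I_i} (1 - y_{π j}/(k - σ_i)))`. -/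
noncomputable def aux (N k : ℕ) (c : ℕ → ℝ) (π : ℕ → ℕ) (y : ℕ → ℝ) : ℝ :=
  ∑ i ∈ Finset.Icc 1 (Kmin N k π - 1),
    alpha c π i * ((k : ℝ) - sigma N π i) *
      (1 - ∏ j ∈ Iset N π i, (1 - y (π j) / ((k : ℝ) - sigma N π i)))

/-- `istar N k π y l` = largest `i ∈ {1,…,K-1}` such that `∑_{j=1}^{i} y_{π j} ≤ k`
and `l + N ∉ {π 1, …, π i}`. -/
noncomputable def istar (N k : ℕ) (π : ℕ → ℕ) (y : ℕ → ℝ) (l : ℕ) : ℕ :=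
  sSup {i | i ∈ Finset.Icc 1 (Kmin N k π - 1) ∧
    (∑ j ∈ Finset.Icc 1 i, y (π j)) ≤ (k : ℝ) ∧
    ∀ v ∈ Finset.Icc 1 i, π v ≠ l + N}

/-- The supergradient vector: `g l = (c (π (i*(l)+1)) - c l) · 𝟙{l* ≤ i*(l)}`, where
`l* = π⁻¹ l` is given by the function `lstar`. -/
noncomputable def superg (N k : ℕ) (c : ℕ → ℝ) (π : ℕ → ℕ) (y : ℕ → ℝ)
    (lstar : ℕ → ℕ) (l : ℕ) : ℝ :=
  if lstar l ≤ istar N k π y l then c (π (istar N k π y l + 1)) - c l else 0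


/-! When its indicator is on, `g l` is the difference `c (π (i* + 1)) - c (π l*)` with `1 ≤ l* ≤ i* < K`, so
monotonicity of `c ∘ π` squeezes it between `0` and `c (π K)`. The index `K` exists because `σ`
climbs in unit steps from `σ 0 = 0` to `σ (2N) = N ≥ k`, and `π K > N` because `σ` jumps at its
first hitting time `K`; hence `c (π K)` is the fetching cost `c_f` plus the cost of the catalog
object `π K - N`. -/

lemma _root_.Nat.exists_eq_of_map_succ_le_add_one {f : ℕ → ℕ} (hstep : ∀ i, f (i + 1) ≤ f i + 1)
    {M m : ℕ} (h0 : f 0 ≤ m) (hM : m ≤ f M) : ∃ i ≤ M, f i = m := by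
  induction M with
  | zero => exact ⟨0, le_rfl, by omega⟩
  | succ M ih =>
    by_cases hm : m ≤ f M
    · obtain ⟨i, hi, hfi⟩ := ih hm
      exact ⟨i, by omega, hfi⟩
    · exact ⟨M + 1, le_rfl, by have := hstep M; omega⟩

section Sigma

variable {N : ℕ} {π : ℕ → ℕ}

@[simp]
lemma sigma_zero : sigma N π 0 = 0 := by
  simp [sigma]

lemma sigma_succ (i : ℕ) :
    sigma N π (i + 1) = sigma N π i + if N < π (i + 1) then 1 else 0 := by
  rw [sigma, sigma, ← Finset.insert_Icc_right_eq_Icc_add_one (by omega), Finset.filter_insert]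
  split_ifs
  · exact Finset.card_insert_of_notMem (by simp)
  · rfl

lemma sigma_succ_le (i : ℕ) : sigma N π (i + 1) ≤ sigma N π i + 1 := by
  rw [sigma_succ]
  split_ifs <;> omega

lemma sigma_two_mul (hπ : Set.BijOn π (Set.Icc 1 (2 * N)) (Set.Icc 1 (2 * N))) :
    sigma N π (2 * N) = N := by
  have hcard : sigma N π (2 * N) = (Finset.Icc (N + 1) (2 * N)).card := by
    refine Finset.card_nbij π (fun j hj => ?_) (hπ.injOn.mono fun j hj => ?_) (fun m hm => ?_)
    · simp only [Finset.coe_filter, Finset.mem_Icc, Set.mem_ofPred_eq] at hj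
      have := hπ.mapsTo (Set.mem_Icc.2 hj.1)
      simp only [Finset.coe_Icc, Set.mem_Icc] at this ⊢
      omega
    · simp only [Finset.coe_filter, Finset.mem_Icc, Set.mem_ofPred_eq] at hj
      exact Set.mem_Icc.2 hj.1
    · simp only [Finset.coe_Icc, Set.mem_Icc] at hm
      obtain ⟨j, hj, rfl⟩ := hπ.surjOn (Set.mem_Icc.2 ⟨by omega, hm.2⟩)
      exact ⟨j, by simpa [Set.mem_Icc.1 hj] using hm.1, rfl⟩
  rw [hcard, Nat.card_Icc]
  omega

lemma exists_sigma_eq (hπ : Set.BijOn π (Set.Icc 1 (2 * N)) (Set.Icc 1 (2 * N)))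
    {k : ℕ} (hkN : k ≤ N) : ∃ i ≤ 2 * N, sigma N π i = k :=
  Nat.exists_eq_of_map_succ_le_add_one sigma_succ_le (by simp) (by rw [sigma_two_mul hπ]; exact hkN)

end Sigma

section Kmin

variable {N k : ℕ} {π : ℕ → ℕ}

lemma Kmin_le_two_mul (hπ : Set.BijOn π (Set.Icc 1 (2 * N)) (Set.Icc 1 (2 * N)))
    (hkN : k ≤ N) : Kmin N k π ≤ 2 * N := by
  obtain ⟨i, hi, hσ⟩ := exists_sigma_eq hπ hkN
  exact (Nat.sInf_le (show i ∈ {i | sigma N π i = k} from hσ)).trans hi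

lemma sigma_Kmin (hπ : Set.BijOn π (Set.Icc 1 (2 * N)) (Set.Icc 1 (2 * N)))
    (hkN : k ≤ N) : sigma N π (Kmin N k π) = k := by
  obtain ⟨i, -, hσ⟩ := exists_sigma_eq hπ hkN
  exact Nat.sInf_mem (s := {i | sigma N π i = k}) ⟨i, hσ⟩

lemma Kmin_pos (hπ : Set.BijOn π (Set.Icc 1 (2 * N)) (Set.Icc 1 (2 * N)))
    (hk : 0 < k) (hkN : k ≤ N) : 0 < Kmin N k π := by
  have hσ := sigma_Kmin hπ hkN
  by_contra h0
  rw [Nat.eq_zero_of_not_pos h0, sigma_zero] at hσ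
  omega

lemma lt_π_Kmin (hπ : Set.BijOn π (Set.Icc 1 (2 * N)) (Set.Icc 1 (2 * N)))
    (hk : 0 < k) (hkN : k ≤ N) : N < π (Kmin N k π) := by
  have hK := Kmin_pos hπ hk hkN
  by_contra hle
  have hσ := sigma_succ (N := N) (π := π) (Kmin N k π - 1)
  rw [Nat.sub_add_cancel hK, if_neg hle, sigma_Kmin hπ hkN] at hσ
  have : Kmin N k π ≤ Kmin N k π - 1 := Nat.sInf_le (show _ = k from hσ.symm)
  omega

end Kmin

lemma istar_le (N k : ℕ) (π : ℕ → ℕ) (y : ℕ → ℝ) (l : ℕ) :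
    istar N k π y l ≤ Kmin N k π - 1 :=
  csSup_le' fun _ hi => (Finset.mem_Icc.1 hi.1).2

section Request

variable {N : ℕ} {cf : ℝ} {c : ℕ → ℝ} {π : ℕ → ℕ}

lemma Request.monotoneOn (hreq : Request N cf c π) : MonotoneOn (c ∘ π) (Set.Icc 1 (2 * N)) :=
  monotoneOn_of_le_add_one Set.ordConnected_Icc fun i _ hi hi' =>
    hreq.2.2.2.1 i hi.1 (by simpa using hi'.2)

lemma Request.cost_eq_sub_add (hreq : Request N cf c π) {m : ℕ} (hNm : N < m) (hm : m ≤ 2 * N) :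
    c m = c (m - N) + cf := by
  have := hreq.2.1 (m - N) (Finset.mem_Icc.2 ⟨by omega, by omega⟩)
  rwa [Nat.sub_add_cancel hNm.le] at this

end Request

lemma superg_mem_Icc {N k : ℕ} {c : ℕ → ℝ} {π : ℕ → ℕ} (y : ℕ → ℝ) {lstar : ℕ → ℕ} {l : ℕ}
    (hmono : MonotoneOn (c ∘ π) (Set.Icc 1 (Kmin N k π))) (hK : 0 ≤ c (π (Kmin N k π)))
    (hcl : 0 ≤ c l) (hl : 1 ≤ lstar l) (hπl : π (lstar l) = l) :
    superg N k c π y lstar l ∈ Set.Icc 0 (c (π (Kmin N k π))) := by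
  have hi := istar_le N k π y l
  unfold superg
  split_ifs with hle
  · have hlow := hmono ⟨hl, by omega⟩ ⟨by omega, by omega⟩ (Nat.le_succ_of_le hle)
    have hup := hmono ⟨by omega, by omega⟩ ⟨by omega, le_rfl⟩ (by omega : istar N k π y l + 1 ≤ _)
    simp only [Function.comp_apply, hπl] at hlow hup
    constructor <;> linarith
  · exact ⟨le_rfl, hK⟩

theorem superg_bound_general
    (N k h : ℕ) (hk : 0 < k) (hkh : k ≤ h) (hhN : h ≤ N)
    (cf : ℝ) (c : ℕ → ℝ) (π : ℕ → ℕ)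
    (hreq : Request N cf c π)
    (y : ℕ → ℝ)
    (lstar : ℕ → ℕ)
    (hlstar : ∀ l ∈ Finset.Icc 1 (2 * N),
      lstar l ∈ Finset.Icc 1 (2 * N) ∧ π (lstar l) = l) :
    ∀ l ∈ Finset.Icc 1 N,
      0 ≤ superg N k c π y lstar l ∧
      superg N k c π y lstar l ≤ c (π (Kmin N k π)) ∧
      |superg N k c π y lstar l| ≤ c (π (Kmin N k π) - N) + cf := by
  intro l hl
  have hkN : k ≤ N := hkh.trans hhN
  have hπ := hreq.2.2.1
  have hK0 := Kmin_pos hπ hk hkN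
  have hK2N := Kmin_le_two_mul hπ hkN
  have hNπK := lt_π_Kmin hπ hk hkN
  have hπK2N : π (Kmin N k π) ≤ 2 * N := (hπ.mapsTo (Set.mem_Icc.2 ⟨hK0, hK2N⟩)).2
  have hcK : 0 ≤ c (π (Kmin N k π)) := hreq.1 _ (Finset.mem_Icc.2 ⟨by omega, hπK2N⟩)
  obtain ⟨hl1, hlN⟩ := Finset.mem_Icc.1 hl
  have hl2N : l ∈ Finset.Icc 1 (2 * N) := Finset.mem_Icc.2 ⟨hl1, by omega⟩
  obtain ⟨hlstar_mem, hπl⟩ := hlstar l hl2N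
  obtain ⟨hg0, hgK⟩ := superg_mem_Icc y (hreq.monotoneOn.mono (Set.Icc_subset_Icc_right hK2N))
    hcK (hreq.1 l hl2N) (Finset.mem_Icc.1 hlstar_mem).1 hπl
  refine ⟨hg0, hgK, ?_⟩
  rw [abs_of_nonneg hg0, ← hreq.cost_eq_sub_add hNπK hπK2N]
  exact hgK

/-- **Subgradient bound (Lemma, Supplementary Sec. H-A).**
For every `l ∈ {1,…,N}`, the supergradient component satisfies
`0 ≤ g l ≤ c (π K)`; in particular (since `π K > N`)
`|g l| ≤ c (π K - N) + c_f`, i.e. the subgradients are bounded in ℓ∞ norm by the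
dissimilarity cost of the `k`-th closest catalog object plus the fetching cost. -/
theorem superg_bound
    (N k h : ℕ) (hN : 0 < N) (hk : 0 < k) (hkh : k ≤ h) (hhN : h ≤ N)
    (cf : ℝ) (hcf : 0 < cf) (c : ℕ → ℝ) (π : ℕ → ℕ)
    (hreq : Request N cf c π)
    (y : ℕ → ℝ) (hy : IsFrac N h y)
    (lstar : ℕ → ℕ)
    (hlstar : ∀ l ∈ Finset.Icc 1 (2 * N),
      lstar l ∈ Finset.Icc 1 (2 * N) ∧ π (lstar l) = l) :
    ∀ l ∈ Finset.Icc 1 N,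
      0 ≤ superg N k c π y lstar l ∧
      superg N k c π y lstar l ≤ c (π (Kmin N k π)) ∧
      |superg N k c π y lstar l| ≤ c (π (Kmin N k π) - N) + cf :=
  superg_bound_general N k h hk hkh hhN cf c π hreq y lstar hlstar

end ACAI
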